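/- arXiv:1608.01589 — 3 statements merged into one kernel-verified Lean document; each statement's English description precedes it below -/
import Mathlib

section
/- For every integer n ≥ 2, the chromatic number of the total Kneser graph satisfies χ(KG(n)) ≤ n·⌈log₂(n/2)⌉ + 1. -/
/-!
Colour a partition by its part `S` with `|S| < n/2`, if it has one, and with a single extra colour
otherwise. The colour of `S` is its dyadic class `j = ⌊log₂ |S|⌋ < ⌈log₂ (n/2)⌉` together with the
element `x ∈ S` of rank `2^(j+1) - |S|`. If `S ⊆ T` have the same colour, then
`#{y ∈ S | y ≤ x} + |S| = 2^(j+1) = #{y ∈ T | y ≤ x} + |T|` and both summands grow from `S` to `T`,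
so `S = T`; the remaining ways for the two partitions to be nested are excluded by `x ∈ S ∩ T` and
by cardinality.
-/

/-- A partition of `{0,…,n-1}` (modeled as `Fin n`) into an unordered pair of nonempty
disjoint subsets covering everything, modeled as a 2-element finset of parts. -/
def TKPart (n : ℕ) (P : Finset (Finset (Fin n))) : Prop :=
  P.card = 2 ∧ (∀ A ∈ P, A.Nonempty) ∧
    (∀ A ∈ P, ∀ B ∈ P, A ≠ B → Disjoint A B) ∧ P.sup id = Finset.univ

/-- Vertices of the total Kneser graph. -/
abbrev TKVert (n : ℕ) := {P : Finset (Finset (Fin n)) // TKPart n P}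

/-- The total Kneser graph `KG(n)`: two distinct partitions are adjacent iff they are
nested, i.e. some part of one is contained in some part of the other. -/
def KG (n : ℕ) : SimpleGraph (TKVert n) where
  Adj P Q := P ≠ Q ∧
    ((∃ A ∈ P.1, ∃ C ∈ Q.1, A ⊆ C) ∨ (∃ C ∈ Q.1, ∃ A ∈ P.1, C ⊆ A))
  symm := by
    constructor
    rintro P Q ⟨hne, h⟩
    refine ⟨hne.symm, ?_⟩
    rcases h with ⟨A, hA, C, hC, hAC⟩ | ⟨C, hC, A, hA, hCA⟩
    · exact Or.inr ⟨A, hA, C, hC, hAC⟩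
    · exact Or.inl ⟨C, hC, A, hA, hCA⟩
  loopless := ⟨fun P h => h.1 rfl⟩

open Finset

lemma Nat.two_pow_succ_log_sub_sub_one_lt {k : ℕ} (hk : k ≠ 0) :
    2 ^ (Nat.log 2 k + 1) - k - 1 < k := by
  have := Nat.pow_log_le_self 2 hk
  rw [pow_succ]
  omega

lemma Nat.log_lt_of_two_mul_lt {k n L : ℕ} (hk : k ≠ 0) (hkn : 2 * k < n)
    (hn : n ≤ 2 ^ (L + 1)) : Nat.log 2 k < L :=
  Nat.log_lt_of_lt_pow hk (by rw [pow_succ] at hn; omega)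

namespace Finset

variable {α : Type*} [LinearOrder α]

lemma card_filter_le_orderEmbOfFin (S : Finset α) (i : Fin #S) :
    #{y ∈ S | y ≤ S.orderEmbOfFin rfl i} = i + 1 := by
  have himage : {y ∈ S | y ≤ S.orderEmbOfFin rfl i} = (Iic i).image (S.orderEmbOfFin rfl) := by
    ext y
    simp only [mem_filter, mem_image, mem_Iic]
    constructor
    · rintro ⟨hyS, hy⟩
      obtain ⟨j, rfl⟩ : y ∈ Set.range (S.orderEmbOfFin rfl) := by
        rwa [range_orderEmbOfFin]
      exact ⟨j, (OrderEmbedding.le_iff_le _).1 hy, rfl⟩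
    · rintro ⟨j, hj, rfl⟩
      exact ⟨orderEmbOfFin_mem _ _ _, (S.orderEmbOfFin rfl).monotone hj⟩
  rw [himage, card_image_of_injective _ (S.orderEmbOfFin rfl).injective, Fin.card_Iic]

noncomputable def dyadicMark (S : Finset α) (hS : S.Nonempty) : α :=
  S.orderEmbOfFin rfl 
    ⟨2 ^ (Nat.log 2 #S + 1) - #S - 1, Nat.two_pow_succ_log_sub_sub_one_lt hS.card_ne_zero⟩

lemma dyadicMark_mem (S : Finset α) (hS : S.Nonempty) : S.dyadicMark hS ∈ S :=
  orderEmbOfFin_mem _ _ _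

lemma card_filter_le_dyadicMark_add_card (S : Finset α) (hS : S.Nonempty) :
    #{y ∈ S | y ≤ S.dyadicMark hS} + #S = 2 ^ (Nat.log 2 #S + 1) := by
  rw [dyadicMark, card_filter_le_orderEmbOfFin]
  have := Nat.lt_pow_succ_log_self (b := 2) (by norm_num) #S
  dsimp only
  omega

lemma eq_of_subset_of_dyadicMark_eq {S T : Finset α} (hST : S ⊆ T) (hS : S.Nonempty)
    (hT : T.Nonempty) (hlog : Nat.log 2 #S = Nat.log 2 #T)
    (hmark : S.dyadicMark hS = T.dyadicMark hT) : S = T := by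
  have hfilter := card_le_card (filter_subset_filter (· ≤ T.dyadicMark hT) hST)
  have hSrank := card_filter_le_dyadicMark_add_card S hS
  have hTrank := card_filter_le_dyadicMark_add_card T hT
  rw [hmark, hlog] at hSrank
  exact eq_of_subset_of_card_le hST (by omega)

end Finset

lemma Real.le_two_pow_toNat_ceil_logb {x : ℝ} (hx : 0 ≤ x) :
    x ≤ 2 ^ (⌈logb 2 x⌉).toNat :=
  calc x ≤ 2 ^ ⌈logb 2 x⌉ := by
        simpa [← ceil_logb_natCast hx] using Int.self_le_zpow_clog (R := ℝ) Nat.one_lt_two x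
    _ ≤ 2 ^ ((⌈logb 2 x⌉).toNat : ℤ) := zpow_le_zpow_right₀ one_le_two (Int.self_le_toNat _)
    _ = 2 ^ (⌈logb 2 x⌉).toNat := zpow_natCast _ _

namespace TKPart

variable {n : ℕ} {P : Finset (Finset (Fin n))} {A : Finset (Fin n)}

lemma eq_pair_compl (hP : TKPart n P) (hA : A ∈ P) : P = {A, Aᶜ} := by
  obtain ⟨hcard, -, hdisj, hcover⟩ := hP
  obtain ⟨a, b, hab, rfl⟩ := card_eq_two.mp hcard
  have hba : b = aᶜ := by
    rw [sup_insert, sup_singleton, id, id] at hcover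
    rw [eq_compl_iff_isCompl]
    exact ⟨(hdisj a (by simp) b (by simp) hab).symm, codisjoint_iff.2 ((sup_comm _ _).trans hcover)⟩
  subst hba
  rcases mem_insert.mp hA with rfl | hA
  · rfl
  · rw [mem_singleton.mp hA, compl_compl, pair_comm]

lemma compl_mem (hP : TKPart n P) (hA : A ∈ P) : Aᶜ ∈ P := by
  rw [hP.eq_pair_compl hA]
  exact mem_insert_of_mem (mem_singleton_self _)

end TKPart

lemma Finset.card_add_card_compl_fin {n : ℕ} (A : Finset (Fin n)) : #A + #Aᶜ = n := by
  rw [card_add_card_compl, Fintype.card_fin]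

namespace TKVert

variable {n : ℕ} {P Q : TKVert n} {A C : Finset (Fin n)}

lemma nonempty_of_mem (P : TKVert n) (hA : A ∈ P.1) : A.Nonempty := P.2.2.1 A hA

lemma eq_of_subset_of_card_le (hA : A ∈ P.1) (hC : C ∈ Q.1) (hAC : A ⊆ C) (hCA : #C ≤ #A) :
    P = Q := by
  obtain rfl := Finset.eq_of_subset_of_card_le hAC hCA
  exact Subtype.ext ((P.2.eq_pair_compl hA).trans (Q.2.eq_pair_compl hC).symm)

lemma eq_of_subset_of_forall_le_two_mul_card (hP : ∀ B ∈ P.1, n ≤ 2 * #B)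
    (hQ : ∀ D ∈ Q.1, n ≤ 2 * #D) (hA : A ∈ P.1) (hC : C ∈ Q.1) (hAC : A ⊆ C) : P = Q := by
  have := hP A hA
  have := hQ Cᶜ (Q.2.compl_mem hC)
  have := card_add_card_compl_fin C
  exact eq_of_subset_of_card_le hA hC hAC (by omega)

lemma eq_of_subset_of_dyadicMark_eq {S T : Finset (Fin n)} (hS : S ∈ P.1) (hT : T ∈ Q.1)
    (hSsmall : 2 * #S < n) (hTsmall : 2 * #T < n) (hlog : Nat.log 2 #S = Nat.log 2 #T)
    (hmark : S.dyadicMark (P.nonempty_of_mem hS) = T.dyadicMark (Q.nonempty_of_mem hT))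
    (hA : A ∈ P.1) (hC : C ∈ Q.1) (hAC : A ⊆ C) : P = Q := by
  rw [P.2.eq_pair_compl hS, mem_insert, mem_singleton] at hA
  rw [Q.2.eq_pair_compl hT, mem_insert, mem_singleton] at hC
  rcases hA with rfl | rfl <;> rcases hC with rfl | rfl
  · rw [Finset.eq_of_subset_of_dyadicMark_eq hAC _ _ hlog hmark] at hS
    exact eq_of_subset_of_card_le hS hT subset_rfl le_rfl
  · have hmem := hAC (dyadicMark_mem _ (P.nonempty_of_mem hS))
    rw [hmark, mem_compl] at hmem
    exact absurd (dyadicMark_mem _ (Q.nonempty_of_mem hT)) hmem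
  · have := card_le_card hAC
    have := card_add_card_compl_fin S
    omega
  · have hTS := compl_subset_compl.mp hAC
    rw [Finset.eq_of_subset_of_dyadicMark_eq hTS _ _ hlog.symm hmark.symm] at hT
    exact (eq_of_subset_of_card_le hT hS subset_rfl le_rfl).symm

end TKVert

namespace KG

variable {n L : ℕ}

noncomputable def color (hn : n ≤ 2 ^ (L + 1)) (P : TKVert n) : Option (Fin n × Fin L) :=
  if h : ∃ S ∈ P.1, 2 * #S < n then
    have hS : h.choose.Nonempty := P.nonempty_of_mem h.choose_spec.1
    some (h.choose.dyadicMark hS,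
      ⟨Nat.log 2 #h.choose, Nat.log_lt_of_two_mul_lt hS.card_ne_zero h.choose_spec.2 hn⟩)
  else none

lemma eq_of_color_eq_of_subset (hn : n ≤ 2 ^ (L + 1)) {P Q : TKVert n}
    (hcolor : color hn P = color hn Q) {A C : Finset (Fin n)} (hA : A ∈ P.1) (hC : C ∈ Q.1)
    (hAC : A ⊆ C) : P = Q := by
  unfold color at hcolor
  by_cases hP : ∃ S ∈ P.1, 2 * #S < n <;> by_cases hQ : ∃ T ∈ Q.1, 2 * #T < n
  · simp only [hP, hQ, dite_true, Option.some.injEq, Prod.mk.injEq, Fin.mk.injEq] at hcolor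
    exact TKVert.eq_of_subset_of_dyadicMark_eq hP.choose_spec.1 hQ.choose_spec.1
      hP.choose_spec.2 hQ.choose_spec.2 hcolor.2 hcolor.1 hA hC hAC
  · simp [hP, hQ] at hcolor
  · simp [hP, hQ] at hcolor
  · push Not at hP hQ
    exact TKVert.eq_of_subset_of_forall_le_two_mul_card hP hQ hA hC hAC

lemma colorable (hn : n ≤ 2 ^ (L + 1)) : (KG n).Colorable (n * L + 1) := by
  let coloring : (KG n).Coloring (Option (Fin n × Fin L)) :=
    SimpleGraph.Coloring.mk (color hn) fun {P Q} hadj hcolor => hadj.1 <| by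
      rcases hadj.2 with ⟨A, hA, C, hC, hAC⟩ | ⟨C, hC, A, hA, hCA⟩
      · exact eq_of_color_eq_of_subset hn hcolor hA hC hAC
      · exact (eq_of_color_eq_of_subset hn hcolor.symm hC hA hCA).symm
  simpa using coloring.colorable

end KG

theorem chromatic_KG_upper_general (n : ℕ) :
    (KG n).chromaticNumber ≤ ((n * (⌈Real.logb 2 ((n : ℝ) / 2)⌉).toNat + 1 : ℕ) : ℕ∞) :=
by
  refine (KG.colorable ?_).chromaticNumber_le
  have hhalf := Real.le_two_pow_toNat_ceil_logb (x := (n : ℝ) / 2) (by positivity)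
  rw [pow_succ]
  exact_mod_cast (by linarith : (n : ℝ) ≤ 2 ^ _ * 2)

/-- `χ(KG(n)) ≤ n⌈log₂(n/2)⌉ + 1`. -/
theorem chromatic_KG_upper (n : ℕ) (hn : 2 ≤ n) :
    (KG n).chromaticNumber ≤ ((n * (⌈Real.logb 2 ((n : ℝ) / 2)⌉).toNat + 1 : ℕ) : ℕ∞) :=
  chromatic_KG_upper_general n
end

section
/- Let n ≥ 2 and let S be an independent set in the total cyclic interval graph CG(n). Then for every partition {A,B} belonging to S, the cardinality of S is at most min(|A|,|B|). -/
/-- `A ⊆ Fin n` is a cyclic interval `{i, i+1, …, i+k-1} (mod n)` with `1 ≤ k ≤ n-1`. -/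
def IsCyclicInterval {n : ℕ} (A : Finset (Fin n)) : Prop :=
  ∃ i k : ℕ, 1 ≤ k ∧ k ≤ n - 1 ∧
    (↑A : Set (Fin n)) = {x : Fin n | ∃ j < k, (x : ℕ) = (i + j) % n}

/-- The vertices of the total cyclic interval graph: partitions both of whose parts are
cyclic intervals. -/
def CGSet (n : ℕ) : Set (TKVert n) := {P | ∀ A ∈ P.1, IsCyclicInterval A}

/-- The total cyclic interval graph `CG(n)`, the induced subgraph of `KG(n)` on partitions
into cyclic intervals. -/
def CG (n : ℕ) : SimpleGraph (CGSet n) := (KG n).induce (CGSet n)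

/-!
Let `i` be the first point of the cyclic interval `A`. For every other member `Q` of `S`, the
part of `Q` containing `i` is, read around the cycle from `i`, an initial segment followed by a
final segment. The initial segment stops at some point `x ≠ i` of `A`: otherwise that part would
contain `A`, nesting `P` and `Q`. Two members stopping at the same `x` have parts of this shape
with the same initial segment, and such sets are nested. Hence `S \ {P}` injects into `A \ {i}`.
-/

section CyclicInterval

variable {n : ℕ} [NeZero n]

open Fin.NatCast

lemma IsCyclicInterval.exists_forall_mem_iff {A : Finset (Fin n)} (hA : IsCyclicInterval A) :
    ∃ c : Fin n, ∃ m, 0 < m ∧ m ≤ n ∧ ∀ x, x ∈ A ↔ (x - c).val < m := by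
  obtain ⟨i, m, hm0, hmn, hA⟩ := hA
  refine ⟨i, m, hm0, by omega, fun x => ?_⟩
  rw [← Finset.mem_coe, hA, Set.mem_ofPred_eq]
  constructor
  · rintro ⟨j, hj, hx⟩
    have : x - i = j := by
      rw [sub_eq_iff_eq_add']
      ext
      simp [Fin.val_add, Fin.val_natCast, hx]
    rw [this, Fin.val_natCast, Nat.mod_eq_of_lt (by omega)]
    exact hj
  · intro hx
    refine ⟨_, hx, ?_⟩
    conv_lhs => rw [← add_sub_cancel (i : Fin n) x]
    rw [Fin.val_add, Fin.val_natCast, Nat.mod_add_mod]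

lemma IsCyclicInterval.exists_forall_mem_iff_of_mem {C : Finset (Fin n)} (hC : IsCyclicInterval C)
    {i : Fin n} (hi : i ∈ C) :
    ∃ a b, 0 < a ∧ ∀ x, x ∈ C ↔ (x - i).val < a ∨ b ≤ (x - i).val := by
  obtain ⟨c, m, -, hmn, hC⟩ := hC.exists_forall_mem_iff
  have hd : (i - c).val < m := (hC i).1 hi
  refine ⟨m - (i - c).val, n - (i - c).val, by omega, fun x => ?_⟩
  have hx : (x - c).val = ((x - i).val + (i - c).val) % n := by
    rw [← Fin.val_add, sub_add_sub_cancel]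
  have := (x - i).isLt
  rw [hC, hx]
  rcases lt_or_ge ((x - i).val + (i - c).val) n with h | h
  · rw [Nat.mod_eq_of_lt h]; omega
  · rw [Nat.mod_eq_sub_mod h, Nat.mod_eq_of_lt (by omega)]; omega

end CyclicInterval

lemma Finset.subset_or_subset_of_forall_mem_iff {α : Type*} {C D : Finset α} {f : α → ℕ}
    {a b b' : ℕ} (hC : ∀ x, x ∈ C ↔ f x < a ∨ b ≤ f x) (hD : ∀ x, x ∈ D ↔ f x < a ∨ b' ≤ f x) :
    C ⊆ D ∨ D ⊆ C := by
  rcases le_total b b' with h | h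
  · right; intro x; rw [hC, hD]; omega
  · left; intro x; rw [hC, hD]; omega

lemma TKPart.exists_mem {n : ℕ} {P : Finset (Finset (Fin n))} (hP : TKPart n P) (x : Fin n) :
    ∃ C ∈ P, x ∈ C := by
  simpa using (hP.2.2.2 ▸ Finset.mem_univ x : x ∈ P.sup id)

lemma CG.adj_of_subset {n : ℕ} {P Q : CGSet n} (hPQ : P ≠ Q) {A C : Finset (Fin n)}
    (hA : A ∈ P.1.1) (hC : C ∈ Q.1.1) (hAC : A ⊆ C) : (CG n).Adj P Q :=
  ⟨fun h => hPQ (Subtype.ext h), Or.inl ⟨A, hA, C, hC, hAC⟩⟩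

section IndependentSet

variable {n : ℕ}

open Fin.NatCast

/-- When `x ≠ i`, `x` is the first point after `i`, going around the cycle, that leaves the part
of `Q` containing `i`. -/
def IsFirstCut (i : Fin n) (Q : CGSet n) (x : Fin n) : Prop :=
  ∃ C ∈ Q.1.1, ∃ b, ∀ z, z ∈ C ↔ (z - i).val < (x - i).val ∨ b ≤ (z - i).val

lemma exists_isFirstCut_mem_erase [NeZero n] {P Q : CGSet n} (hPQ : ¬ (CG n).Adj P Q)
    (hQP : Q ≠ P) {A : Finset (Fin n)} (hA : A ∈ P.1.1) {i : Fin n} {k : ℕ} (hkn : k ≤ n)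
    (hAi : ∀ x, x ∈ A ↔ (x - i).val < k) :
    ∃ x ∈ A.erase i, IsFirstCut i Q x := by
  obtain ⟨C, hCQ, hiC⟩ := Q.1.2.exists_mem i
  obtain ⟨a, b, ha0, hC⟩ := (Q.2 C hCQ).exists_forall_mem_iff_of_mem hiC
  have hak : a < k := by
    by_contra! h
    refine hPQ (CG.adj_of_subset hQP.symm hA hCQ fun z hz => ?_)
    exact (hC z).2 (Or.inl (((hAi z).1 hz).trans_le h))
  have hx : ((i + (a : Fin n)) - i).val = a := by
    rw [add_sub_cancel_left, Fin.val_natCast, Nat.mod_eq_of_lt (by omega)]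
  refine ⟨i + (a : Fin n), Finset.mem_erase.2 ⟨fun h => ?_, (hAi _).2 (by rwa [hx])⟩,
    C, hCQ, b, by rwa [hx]⟩
  rw [h, sub_self, Fin.val_zero] at hx
  omega

lemma subsingleton_isFirstCut {S : Finset (CGSet n)} (hS : ∀ P ∈ S, ∀ Q ∈ S, ¬ (CG n).Adj P Q)
    (i x : Fin n) : ({Q ∈ S | IsFirstCut i Q x} : Set (CGSet n)).Subsingleton := by
  rintro Q ⟨hQ, C, hCQ, b, hC⟩ Q' ⟨hQ', C', hCQ', b', hC'⟩
  by_contra hne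
  rcases Finset.subset_or_subset_of_forall_mem_iff hC hC' with h | h
  · exact hS Q hQ Q' hQ' (CG.adj_of_subset hne hCQ hCQ' h)
  · exact hS Q' hQ' Q hQ (CG.adj_of_subset (Ne.symm hne) hCQ' hCQ h)

theorem card_le_card_of_mem_of_forall_not_adj {S : Finset (CGSet n)}
    (hS : ∀ P ∈ S, ∀ Q ∈ S, ¬ (CG n).Adj P Q) {P : CGSet n} (hP : P ∈ S)
    {A : Finset (Fin n)} (hA : A ∈ P.1.1) : S.card ≤ A.card := by
  obtain ⟨y, -⟩ := P.1.2.2.1 A hA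
  have : NeZero n := ⟨y.pos.ne'⟩
  obtain ⟨i, k, hk0, hkn, hAi⟩ := (P.2 A hA).exists_forall_mem_iff
  have hiA : i ∈ A := by rwa [hAi, sub_self, Fin.val_zero]
  have hcard : (S.erase P).card ≤ (A.erase i).card :=
    Finset.card_le_card_of_forall_subsingleton (IsFirstCut i)
      (fun Q hQ => exists_isFirstCut_mem_erase (hS P hP Q (Finset.mem_of_mem_erase hQ))
        (Finset.ne_of_mem_erase hQ) hA hkn hAi)
      (fun x _ => (subsingleton_isFirstCut hS i x).anti fun _ ⟨hQ, h⟩ =>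
        ⟨Finset.mem_of_mem_erase hQ, h⟩)
  rw [Finset.card_erase_of_mem hP, Finset.card_erase_of_mem hiA] at hcard
  have := Finset.card_pos.2 ⟨i, hiA⟩
  omega

end IndependentSet

theorem indep_set_card_le_general (n : ℕ) (S : Finset ↥(CGSet n))
    (hS : ∀ P ∈ S, ∀ Q ∈ S, ¬ (CG n).Adj P Q)
    (P : ↥(CGSet n)) (hP : P ∈ S) (A B : Finset (Fin n))
    (hA : A ∈ P.1.1) (hB : B ∈ P.1.1) :
    S.card ≤ min A.card B.card :=
  le_min (card_le_card_of_mem_of_forall_not_adj hS hP hA)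
    (card_le_card_of_mem_of_forall_not_adj hS hP hB)

/-- If `S` is an independent set in `CG(n)`, then for every partition `{A,B} ∈ S`,
`|S| ≤ min(|A|,|B|)`; equivalently, `|S| ≤ |A|` for each part `A` of each member of `S`. -/
theorem indep_set_card_le (n : ℕ) (hn : 2 ≤ n) (S : Finset ↥(CGSet n))
    (hS : ∀ P ∈ S, ∀ Q ∈ S, ¬ (CG n).Adj P Q)
    (P : ↥(CGSet n)) (hP : P ∈ S) (A B : Finset (Fin n))
    (hA : A ∈ P.1.1) (hB : B ∈ P.1.1) (hAB : A ≠ B) :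
    S.card ≤ min A.card B.card :=
  indep_set_card_le_general n S hS P hP A B hA hB
end

section
/- For every integer n ≥ 2 there exists a fractional coloring of the total Kneser graph KG(n) of total weight n·H_{⌊(n−1)/2⌋} + (1 − p(n)): that is, a function μ assigning a nonnegative real number to each independent set of KG(n) such that for every vertex v one has ∑_{S : v ∈ S} μ(S) ≥ 1, and ∑_S μ(S) = n·H_{⌊(n−1)/2⌋} + (1 − p(n)). -/
open Finset

instance (n : ℕ) : DecidablePred (TKPart n) := fun P => by
  unfold TKPart; infer_instance

section PointMassSum

variable {ι V : Type*} [DecidableEq V]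

def pointMassSum (s : Finset ι) (F : ι → Finset V) (w : ι → ℝ) (S : Finset V) : ℝ :=
  ∑ j ∈ s, if F j = S then w j else 0

variable {s : Finset ι} {F : ι → Finset V} {w : ι → ℝ}

lemma pointMassSum_nonneg (hw : ∀ j ∈ s, 0 ≤ w j) (S : Finset V) :
    0 ≤ pointMassSum s F w S :=
  sum_nonneg fun j hj => by split_ifs <;> simp [hw j hj]

lemma exists_eq_of_pointMassSum_ne_zero {S : Finset V} (h : pointMassSum s F w S ≠ 0) :
    ∃ j ∈ s, F j = S := by
  obtain ⟨j, hj, hne⟩ := exists_ne_zero_of_sum_ne_zero h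
  exact ⟨j, hj, by_contra fun hF => hne (if_neg hF)⟩

lemma sum_ite_mem_pointMassSum [Fintype V] (v : V) :
    ∑ S : Finset V, (if v ∈ S then pointMassSum s F w S else 0) =
      ∑ j ∈ s, if v ∈ F j then w j else 0 := by
  have h (S : Finset V) : (if v ∈ S then pointMassSum s F w S else 0) =
      ∑ j ∈ s, if F j = S then (if v ∈ F j then w j else 0) else 0 := by
    by_cases hv : v ∈ S <;> simp +contextual [pointMassSum, hv]
  simp_rw [h]
  rw [sum_comm]
  simp

lemma sum_pointMassSum [Fintype V] : ∑ S : Finset V, pointMassSum s F w S = ∑ j ∈ s, w j := by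
  unfold pointMassSum
  rw [sum_comm]
  simp

end PointMassSum

variable {n : ℕ}

lemma TKPart.eq_pair_compl_s6 {P : Finset (Finset (Fin n))} (hP : TKPart n P)
    {A : Finset (Fin n)} (hA : A ∈ P) : P = {A, Aᶜ} := by
  obtain ⟨hcard, -, hdisj, hcover⟩ := hP
  obtain ⟨B, hB, hBA⟩ := exists_mem_ne (by omega : 1 < P.card) A
  have hP : P = {A, B} := (eq_of_subset_of_card_le (by simp [insert_subset_iff, hA, hB])
    (by rw [hcard, card_pair hBA.symm])).symm
  have hcompl : IsCompl A B := by
    refine ⟨hdisj A hA B hB hBA.symm, codisjoint_iff.2 ?_⟩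
    simpa [hP] using hcover
  rw [hP, hcompl.compl_eq]

namespace TKVert

lemma compl_mem {v : TKVert n} {A : Finset (Fin n)} (hA : A ∈ v.1) : Aᶜ ∈ v.1 := by
  rw [v.2.eq_pair_compl_s6 hA]; simp

lemma eq_of_mem_of_mem {v w : TKVert n} {A : Finset (Fin n)} (hv : A ∈ v.1) (hw : A ∈ w.1) :
    v = w :=
  Subtype.ext ((v.2.eq_pair_compl_s6 hv).trans (w.2.eq_pair_compl_s6 hw).symm)

lemma mem_iff {v : TKVert n} {A : Finset (Fin n)} (hA : A ∈ v.1) {X : Finset (Fin n)} :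
    X ∈ v.1 ↔ X = A ∨ X = Aᶜ := by
  rw [v.2.eq_pair_compl_s6 hA]; simp

end TKVert

lemma KG.exists_ssubset_of_adj {P Q : TKVert n} (h : (KG n).Adj P Q) :
    ∃ X ∈ P.1, ∃ Y ∈ Q.1, X ⊂ Y ∨ Y ⊂ X := by
  obtain ⟨hne, ⟨X, hX, Y, hY, hXY⟩ | ⟨Y, hY, X, hX, hYX⟩⟩ := h
  · exact ⟨X, hX, Y, hY,
      .inl (hXY.ssubset_of_ne fun h => hne (TKVert.eq_of_mem_of_mem hX (h ▸ hY)))⟩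
  · exact ⟨X, hX, Y, hY,
      .inr (hYX.ssubset_of_ne fun h => hne (TKVert.eq_of_mem_of_mem (h ▸ hX) hY))⟩

lemma KG.isIndepSet_of_forall_not_ssubset {S : Set (TKVert n)}
    (h : ∀ P ∈ S, ∀ Q ∈ S, ∀ X ∈ P.1, ∀ Y ∈ Q.1, ¬ X ⊂ Y) : (KG n).IsIndepSet S := by
  intro P hP Q hQ _ hadj
  obtain ⟨X, hX, Y, hY, hXY | hYX⟩ := exists_ssubset_of_adj hadj
  · exact h P hP Q hQ X hX Y hY hXY
  · exact h Q hQ P hP Y hY X hX hYX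

def starVerts (n : ℕ) (i : Fin n) (k : ℕ) : Finset (TKVert n) :=
  univ.filter fun v => ∃ A ∈ v.1, i ∈ A ∧ A.card = k

def balancedVerts (n : ℕ) : Finset (TKVert n) :=
  univ.filter fun v => ∀ A ∈ v.1, 2 * A.card = n

lemma starVerts_isIndepSet {i : Fin n} {k : ℕ} (hk : 2 * k < n) :
    (KG n).IsIndepSet (starVerts n i k : Set (TKVert n)) := by
  have parts {v : TKVert n} (hv : v ∈ starVerts n i k) {X : Finset (Fin n)} (hX : X ∈ v.1) :
      i ∈ X ∧ X.card = k ∨ i ∉ X ∧ X.card = n - k := by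
    obtain ⟨A, hA, hiA, rfl⟩ := (mem_filter.1 hv).2
    rcases (TKVert.mem_iff hA).1 hX with rfl | rfl
    · exact .inl ⟨hiA, rfl⟩
    · exact .inr ⟨by simpa using hiA, by simp [card_compl]⟩
  refine KG.isIndepSet_of_forall_not_ssubset fun P hP Q hQ X hX Y hY hXY => ?_
  have hlt := card_lt_card hXY
  rcases parts hP hX with ⟨hiX, hX⟩ | ⟨-, hX⟩ <;> rcases parts hQ hY with ⟨hiY, hY⟩ | ⟨hiY, hY⟩
  all_goals first | omega | exact hiY (hXY.subset hiX)

lemma balancedVerts_isIndepSet : (KG n).IsIndepSet (balancedVerts n : Set (TKVert n)) := by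
  refine KG.isIndepSet_of_forall_not_ssubset fun P hP Q hQ X hX Y hY hXY => ?_
  have hXn := (mem_filter.1 hP).2 X hX
  have hYn := (mem_filter.1 hQ).2 Y hY
  have := card_lt_card hXY
  omega

lemma TKVert.exists_mem_two_mul_card_le (v : TKVert n) : ∃ A ∈ v.1, 2 * A.card ≤ n := by
  obtain ⟨A, hA⟩ := card_pos.1 (v.2.1 ▸ two_pos)
  by_cases h : 2 * A.card ≤ n
  · exact ⟨A, hA, h⟩
  · refine ⟨Aᶜ, compl_mem hA, ?_⟩
    rw [card_compl, Fintype.card_fin]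
    omega

def colorIndex (n : ℕ) : Finset (Option (Fin n × ℕ)) :=
  insertNone (univ ×ˢ Icc 1 ((n - 1) / 2))

def colorClass (n : ℕ) : Option (Fin n × ℕ) → Finset (TKVert n)
  | none => balancedVerts n
  | some (i, k) => starVerts n i k

noncomputable def colorWeight (n : ℕ) : Option (Fin n × ℕ) → ℝ
  | none => 1 - (n % 2 : ℕ)
  | some (_, k) => (k : ℝ)⁻¹

lemma colorWeight_nonneg : ∀ j, 0 ≤ colorWeight n j
  | none => by simp only [colorWeight, sub_nonneg, Nat.cast_le_one]; omega
  | some (_, k) => by simp [colorWeight]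

lemma colorClass_isIndepSet : ∀ j ∈ colorIndex n, (KG n).IsIndepSet (colorClass n j : Set _)
  | none, _ => balancedVerts_isIndepSet
  | some (i, k), hj => starVerts_isIndepSet (by simp [colorIndex] at hj; omega)

lemma one_le_sum_colorWeight (v : TKVert n) :
    1 ≤ ∑ j ∈ colorIndex n, if v ∈ colorClass n j then colorWeight n j else 0 := by
  have nonneg (j) : 0 ≤ if v ∈ colorClass n j then colorWeight n j else 0 := by
    split_ifs
    exacts [colorWeight_nonneg j, le_rfl]
  rw [colorIndex, sum_insertNone]
  obtain ⟨A, hA, hAn⟩ := v.exists_mem_two_mul_card_le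
  rcases hAn.lt_or_eq with hlt | hbal
  · have hAk : 0 < A.card := card_pos.2 (v.2.2.1 A hA)
    have hsub : A ×ˢ {A.card} ⊆ univ ×ˢ Icc 1 ((n - 1) / 2) := by
      intro x hx
      simp only [mem_product, mem_singleton] at hx
      simp only [mem_product, mem_univ, mem_Icc, hx.2, true_and]
      omega
    have hstar : ∀ x ∈ A ×ˢ {A.card}, v ∈ colorClass n (some x) := by
      rintro ⟨i, k⟩ hx
      simp only [mem_product, mem_singleton] at hx
      exact mem_filter.2 ⟨mem_univ _, A, hA, hx.1, hx.2.symm⟩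
    calc (1 : ℝ) = ∑ x ∈ A ×ˢ {A.card}, colorWeight n (some x) := by
          simp [colorWeight, hAk.ne']
      _ = ∑ x ∈ A ×ˢ {A.card}, if v ∈ colorClass n (some x) then colorWeight n (some x) else 0 :=
          sum_congr rfl fun x hx => (if_pos (hstar x hx)).symm
      _ ≤ ∑ x ∈ univ ×ˢ Icc 1 ((n - 1) / 2), _ :=
          sum_le_sum_of_subset_of_nonneg hsub fun x _ _ => nonneg _
      _ ≤ _ := le_add_of_nonneg_left (nonneg none)
  · have hv : v ∈ colorClass n none := by
      refine mem_filter.2 ⟨mem_univ _, fun X hX => ?_⟩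
      rcases (TKVert.mem_iff hA).1 hX with rfl | rfl
      · exact hbal
      · rw [card_compl, Fintype.card_fin]; omega
    have hweight : colorWeight n none = 1 := by
      simp only [colorWeight]; rw [show n % 2 = 0 by omega]; simp
    rw [if_pos hv, hweight]
    exact le_add_of_nonneg_right (sum_nonneg fun x _ => nonneg _)

lemma sum_colorWeight :
    ∑ j ∈ colorIndex n, colorWeight n j =
      n * ((harmonic ((n - 1) / 2) : ℚ) : ℝ) + (1 - ((n % 2 : ℕ) : ℝ)) := by
  simp only [colorIndex, colorWeight, sum_insertNone, sum_product, sum_const, card_univ,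
    Fintype.card_fin, nsmul_eq_mul, harmonic_eq_sum_Icc, Rat.cast_sum, Rat.cast_inv,
    Rat.cast_natCast]
  ring

theorem fractional_coloring_KG_general (n : ℕ) :
    ∃ μ : Finset (TKVert n) → ℝ,
      (∀ S, 0 ≤ μ S) ∧
      (∀ S, μ S ≠ 0 → ∀ P ∈ S, ∀ Q ∈ S, ¬ (KG n).Adj P Q) ∧
      (∀ v : TKVert n, 1 ≤ ∑ᶠ S : Finset (TKVert n), if v ∈ S then μ S else 0) ∧
      ∑ᶠ S : Finset (TKVert n), μ S
        = (n : ℝ) * ((harmonic ((n - 1) / 2) : ℚ) : ℝ) + (1 - ((n % 2 : ℕ) : ℝ)) := by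
  refine ⟨pointMassSum (colorIndex n) (colorClass n) (colorWeight n),
    pointMassSum_nonneg fun j _ => colorWeight_nonneg j, ?_, fun v => ?_, ?_⟩
  · intro S hS P hP Q hQ hadj
    obtain ⟨j, hj, rfl⟩ := exists_eq_of_pointMassSum_ne_zero hS
    exact colorClass_isIndepSet j hj hP hQ hadj.ne hadj
  · rw [finsum_eq_sum_of_fintype, sum_ite_mem_pointMassSum]
    exact one_le_sum_colorWeight v
  · rw [finsum_eq_sum_of_fintype, sum_pointMassSum, sum_colorWeight]

/-- `KG(n)` has a fractional coloring of total weight `n·H_{⌊(n-1)/2⌋} + (1 - p(n))`: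
a nonnegative weight on independent sets covering every vertex with total weight ≥ 1. -/
theorem fractional_coloring_KG (n : ℕ) (hn : 2 ≤ n) :
    ∃ μ : Finset (TKVert n) → ℝ,
      (∀ S, 0 ≤ μ S) ∧
      (∀ S, μ S ≠ 0 → ∀ P ∈ S, ∀ Q ∈ S, ¬ (KG n).Adj P Q) ∧
      (∀ v : TKVert n, 1 ≤ ∑ᶠ S : Finset (TKVert n), if v ∈ S then μ S else 0) ∧
      ∑ᶠ S : Finset (TKVert n), μ S
        = (n : ℝ) * ((harmonic ((n - 1) / 2) : ℚ) : ℝ) + (1 - ((n % 2 : ℕ) : ℝ)) :=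
  fractional_coloring_KG_general n
end
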